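/- arXiv:1209.5516 — 3 statements merged into one kernel-verified Lean document; each statement's English description precedes it below -/
import Mathlib

section
/- Let n ≥ 4 and 3 ≤ i ≤ n−1, and set δ(i) = −(n − i − 1/2)λ_i + ρ. Then there is no simple root α' ∈ Π(𝔩) and no sequence (β_1, …, β_m) of positive roots of B_n that links −α' + δ(i) to −2e_i + δ(i). (This is the combinatorial content, via Lepowsky's criterion, of Proposition 6.6: the standard map from M_q(−2ε_i−(n−i−1/2)λ_i+ρ) to M_q(−(n−i−1/2)λ_i+ρ) for the maximal parabolic subalgebra of type B_n(i) is non-zero.) -/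
/-!
Statement 0 (Proposition 6.6, combinatorial content via Lepowsky's criterion):
for `B_n(i)` with `n ≥ 4`, `3 ≤ i ≤ n − 1` and `δ(i) = −(n − i − 1/2)λ_i + ρ`,
there is no simple root `α' ∈ Π(𝔩)` and no sequence of positive roots of `B_n`
linking `−α' + δ(i)` to `−2e_i + δ(i)`.
-/

open scoped RealInnerProductSpace

noncomputable section

/-- The standard basis vector `e_j` of `ℝ^n`, with 1-based index `1 ≤ j ≤ n`. -/
def E (n j : ℕ) : EuclideanSpace ℝ (Fin n) :=
  if h : 1 ≤ j ∧ j ≤ n then EuclideanSpace.single (⟨j - 1, by omega⟩ : Fin n) 1 else 0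

/-- The coroot `β^∨ = 2β/⟨β,β⟩`. -/
def coroot {n : ℕ} (β : EuclideanSpace ℝ (Fin n)) : EuclideanSpace ℝ (Fin n) :=
  (2 / ⟪β, β⟫) • β

/-- The reflection `s_β(v) = v − ⟨v, β^∨⟩ β`. -/
def sRefl {n : ℕ} (β v : EuclideanSpace ℝ (Fin n)) : EuclideanSpace ℝ (Fin n) :=
  v - ⟪v, coroot β⟫ • β

/-- The fundamental weight `λ_i = e_1 + ⋯ + e_i`. -/
def lambdaF (n i : ℕ) : EuclideanSpace ℝ (Fin n) := ∑ j ∈ Finset.Icc 1 i, E n j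

/-- Half the sum of the positive roots of type `B_n`:
`ρ = Σ_{j=1}^n (n − j + 1/2) e_j`. -/
def rhoB (n : ℕ) : EuclideanSpace ℝ (Fin n) :=
  ∑ j ∈ Finset.Icc 1 n, ((n : ℝ) - (j : ℝ) + 1 / 2) • E n j

/-- `δ(i) = −(n − i − 1/2)λ_i + ρ`. -/
def deltaB (n i : ℕ) : EuclideanSpace ℝ (Fin n) :=
  (-((n : ℝ) - (i : ℝ) - 1 / 2)) • lambdaF n i + rhoB n

/-- The positive roots of type `B_n`:
`{e_j − e_k : j < k} ∪ {e_j + e_k : j < k} ∪ {e_j}`. -/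
def DeltaPlusB (n : ℕ) : Set (EuclideanSpace ℝ (Fin n)) :=
  {v | ∃ j k, 1 ≤ j ∧ j < k ∧ k ≤ n ∧ v = E n j - E n k} ∪
  {v | ∃ j k, 1 ≤ j ∧ j < k ∧ k ≤ n ∧ v = E n j + E n k} ∪
  {v | ∃ j, 1 ≤ j ∧ j ≤ n ∧ v = E n j}

/-- `Π(𝔩)`: the simple roots `α_j = e_j − e_{j+1}` (`1 ≤ j ≤ n−1`) and `α_n = e_n`,
with `α_i` removed. -/
def PiL (n i : ℕ) : Set (EuclideanSpace ℝ (Fin n)) :=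
  {v | ∃ j, 1 ≤ j ∧ j ≤ n - 1 ∧ j ≠ i ∧ v = E n j - E n (j + 1)} ∪
  {v | n ≠ i ∧ v = E n n}

/-- `Links (β_1, …, β_m) δ λ`: with `δ_0 = δ`,  `δ_t = s_{β_t}(δ_{t−1})`, one has
`δ_m = λ` and `⟨δ_{t−1}, β_t^∨⟩ ∈ ℤ_{≥0}` for every `t`. -/
inductive Links {n : ℕ} :
    List (EuclideanSpace ℝ (Fin n)) → EuclideanSpace ℝ (Fin n) →
      EuclideanSpace ℝ (Fin n) → Prop
  | nil (δ : EuclideanSpace ℝ (Fin n)) : Links [] δ δ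
  | cons {β : EuclideanSpace ℝ (Fin n)} {βs : List (EuclideanSpace ℝ (Fin n))}
      {δ lam : EuclideanSpace ℝ (Fin n)} (c : ℕ)
      (hc : ⟪δ, coroot β⟫ = (c : ℝ)) (h : Links βs (sRefl β δ) lam) :
      Links (β :: βs) δ lam

/-!
The key invariant is the coset of a weight modulo the integer lattice `ℤⁿ`: positive roots of
`B_n` are integral, so every linking step `δ ↦ δ - c β` keeps it. The weight `δ(i)` has
integral coordinates in positions `≤ i` and half-integral ones after, so along a chain starting
in `δ(i) + ℤⁿ` the roots `e_j - e_k` with `j ≤ i < k` pair with the weight to a half-integer and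
can never be used. Each remaining root pairs non-negatively with the indicator `u` of the
positions `≤ j` in the same block (`≤ i` or `> i`) as `j`, so `⟨·, u⟩` can only decrease along
the chain. For `α' = α_j` (`j ≠ i`) this makes `⟨-α' + δ(i), u⟩ = ⟨δ(i), u⟩ - 1` at least
`⟨-2e_i + δ(i), u⟩ = ⟨δ(i), u⟩`, which is absurd.
-/

lemma E_eq_zero {n j : ℕ} (h : ¬(1 ≤ j ∧ j ≤ n)) : E n j = 0 := dif_neg h

lemma inner_E_E {n j : ℕ} (hj : 1 ≤ j) (hjn : j ≤ n) (k : ℕ) :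
    ⟪E n j, E n k⟫ = if j = k then 1 else 0 := by
  by_cases hk : 1 ≤ k ∧ k ≤ n
  · simp only [E, dif_pos hk, dif_pos (And.intro hj hjn), EuclideanSpace.inner_single_left,
      PiLp.single_apply, Fin.ext_iff]
    split_ifs <;> first | omega | simp
  · rw [E_eq_zero hk, inner_zero_right, if_neg (by omega)]

lemma inner_E_sum_smul {n j : ℕ} (hj : 1 ≤ j) (hjn : j ≤ n) (s : Finset ℕ) (f : ℕ → ℝ) :
    ⟪E n j, ∑ m ∈ s, f m • E n m⟫ = if j ∈ s then f j else 0 := by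
  simp only [inner_sum, real_inner_smul_right, inner_E_E hj hjn, mul_ite, mul_one, mul_zero,
    Finset.sum_ite_eq]

lemma inner_E_sum {n j : ℕ} (hj : 1 ≤ j) (hjn : j ≤ n) (s : Finset ℕ) :
    ⟪E n j, ∑ m ∈ s, E n m⟫ = if j ∈ s then 1 else 0 := by
  simpa using inner_E_sum_smul hj hjn s 1

lemma inner_coroot_E_sub_E {n j k : ℕ} (hj : 1 ≤ j) (hjn : j ≤ n) (hk : 1 ≤ k) (hkn : k ≤ n)
    (hjk : j ≠ k) (x : EuclideanSpace ℝ (Fin n)) :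
    ⟪x, coroot (E n j - E n k)⟫ = ⟪E n j, x⟫ - ⟪E n k, x⟫ := by
  have hnorm : ⟪E n j - E n k, E n j - E n k⟫ = 2 := by
    simp only [inner_sub_left, inner_sub_right, inner_E_E hj hjn, inner_E_E hk hkn,
      if_neg hjk, if_neg hjk.symm]
    norm_num
  rw [coroot, hnorm, real_inner_smul_right, inner_sub_right, real_inner_comm x,
    real_inner_comm x]
  norm_num

lemma inner_E_deltaB {n i k : ℕ} (hk : 1 ≤ k) (hkn : k ≤ n) :
    ⟪E n k, deltaB n i⟫ = if k ≤ i then (i : ℝ) - k + 1 else (n : ℝ) - k + 1 / 2 := by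
  simp only [deltaB, lambdaF, rhoB, inner_add_right, real_inner_smul_right, inner_E_sum hk hkn,
    inner_E_sum_smul hk hkn, Finset.mem_Icc, hk, hkn, true_and, and_self, if_true]
  split_ifs <;> ring

def integerLattice (n : ℕ) : AddSubgroup (EuclideanSpace ℝ (Fin n)) :=
  AddSubgroup.closure (Set.range (E n))

lemma E_mem_integerLattice (n j : ℕ) : E n j ∈ integerLattice n :=
  AddSubgroup.subset_closure ⟨j, rfl⟩

lemma exists_inner_E_eq_intCast {n : ℕ} {v : EuclideanSpace ℝ (Fin n)}
    (hv : v ∈ integerLattice n) (k : ℕ) : ∃ z : ℤ, ⟪E n k, v⟫ = z := by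
  by_cases hk : 1 ≤ k ∧ k ≤ n
  · induction hv using AddSubgroup.closure_induction with
    | mem _ hmem =>
      obtain ⟨m, rfl⟩ := hmem
      rw [inner_E_E hk.1 hk.2]
      split_ifs
      exacts [⟨1, by simp⟩, ⟨0, by simp⟩]
    | zero => exact ⟨0, by simp⟩
    | add _ _ _ _ ha hb =>
      obtain ⟨a, ha⟩ := ha
      obtain ⟨b, hb⟩ := hb
      exact ⟨a + b, by rw [inner_add_right, ha, hb]; push_cast; ring⟩
    | neg _ _ ha =>
      obtain ⟨a, ha⟩ := ha
      exact ⟨-a, by rw [inner_neg_right, ha]; push_cast; ring⟩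
  · exact ⟨0, by rw [E_eq_zero hk, inner_zero_left]; simp⟩

lemma DeltaPlusB_subset_integerLattice (n : ℕ) : DeltaPlusB n ⊆ integerLattice n := by
  rintro β ((⟨j, k, -, -, -, rfl⟩ | ⟨j, k, -, -, -, rfl⟩) | ⟨j, -, -, rfl⟩)
  · exact sub_mem (E_mem_integerLattice n j) (E_mem_integerLattice n k)
  · exact add_mem (E_mem_integerLattice n j) (E_mem_integerLattice n k)
  · exact E_mem_integerLattice n j

lemma PiL_subset_DeltaPlusB {n : ℕ} (hn : 1 ≤ n) (i : ℕ) : PiL n i ⊆ DeltaPlusB n := by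
  rintro α (⟨j, hj, hjn, -, rfl⟩ | ⟨-, rfl⟩)
  · exact Or.inl (Or.inl ⟨j, j + 1, hj, by omega, by omega, rfl⟩)
  · exact Or.inr ⟨n, hn, le_rfl, rfl⟩

theorem Links.inner_le {n : ℕ} {βs : List (EuclideanSpace ℝ (Fin n))}
    {x y δ u : EuclideanSpace ℝ (Fin n)} (h : Links βs x y)
    (hβs : ∀ β ∈ βs, β ∈ integerLattice n ∧
      ∀ z, z - δ ∈ integerLattice n → ∀ c : ℕ, ⟪z, coroot β⟫ = c → 0 ≤ ⟪β, u⟫)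
    (hx : x - δ ∈ integerLattice n) : ⟪y, u⟫ ≤ ⟪x, u⟫ := by
  induction h with
  | nil => exact le_rfl
  | @cons β βs z _ c hc _ ih =>
    obtain ⟨hβL, hβu⟩ := hβs β List.mem_cons_self
    have hrefl : sRefl β z = z - (c : ℝ) • β := by rw [sRefl, hc]
    have hstep : sRefl β z - δ ∈ integerLattice n := by
      rw [hrefl, sub_right_comm, Nat.cast_smul_eq_nsmul]
      exact sub_mem hx (nsmul_mem hβL c)
    have hle := ih (fun b hb => hβs b (List.mem_cons_of_mem β hb)) hstep
    rw [hrefl, inner_sub_left, real_inner_smul_left] at hle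
    have hdrop := mul_nonneg (Nat.cast_nonneg c) (hβu z hx c hc)
    linarith

lemma inner_coroot_E_sub_E_ne_natCast {n i j k : ℕ} (hj : 1 ≤ j) (hji : j ≤ i) (hik : i < k)
    (hkn : k ≤ n) {x : EuclideanSpace ℝ (Fin n)} (hx : x - deltaB n i ∈ integerLattice n)
    (c : ℕ) : ⟪x, coroot (E n j - E n k)⟫ ≠ c := by
  obtain ⟨a, ha⟩ := exists_inner_E_eq_intCast hx j
  obtain ⟨b, hb⟩ := exists_inner_E_eq_intCast hx k
  rw [inner_sub_right, inner_E_deltaB hj (by omega), if_pos hji] at ha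
  rw [inner_sub_right, inner_E_deltaB (by omega) hkn, if_neg (by omega)] at hb
  rw [inner_coroot_E_sub_E hj (by omega) (by omega) hkn (by omega)]
  intro hc
  -- `2 (x_j - x_k)` is odd
  have hodd : ((2 * (a - b + i - j - n + k) + 1 : ℤ) : ℝ) = ((2 * c : ℤ) : ℝ) := by
    push_cast; linarith
  have := Int.cast_injective hodd
  omega

def blockPrefix (n i j : ℕ) : EuclideanSpace ℝ (Fin n) :=
  ∑ m ∈ (Finset.Icc 1 j).filter (fun m => m ≤ i ↔ j ≤ i), E n m

lemma inner_E_blockPrefix {n i j k : ℕ} (hk : 1 ≤ k) (hkn : k ≤ n) :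
    ⟪E n k, blockPrefix n i j⟫ = if k ≤ j ∧ (k ≤ i ↔ j ≤ i) then 1 else 0 := by
  simp only [blockPrefix, inner_E_sum hk hkn, Finset.mem_filter, Finset.mem_Icc, hk, true_and]

lemma inner_E_blockPrefix_of_ne {n i j : ℕ} (hij : i ≠ j) : ⟪E n i, blockPrefix n i j⟫ = 0 := by
  by_cases hi : 1 ≤ i ∧ i ≤ n
  · rw [inner_E_blockPrefix hi.1 hi.2, if_neg (by omega)]
  · rw [E_eq_zero hi, inner_zero_left]

lemma inner_blockPrefix_nonneg {n i j : ℕ} {β x : EuclideanSpace ℝ (Fin n)}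
    (hβ : β ∈ DeltaPlusB n) (hx : x - deltaB n i ∈ integerLattice n) {c : ℕ}
    (hc : ⟪x, coroot β⟫ = c) : 0 ≤ ⟪β, blockPrefix n i j⟫ := by
  rcases hβ with (⟨p, q, hp, hpq, hqn, rfl⟩ | ⟨p, q, hp, hpq, hqn, rfl⟩) | ⟨p, hp, hpn, rfl⟩
  · by_cases hcross : p ≤ i ∧ i < q
    · exact absurd hc (inner_coroot_E_sub_E_ne_natCast hp hcross.1 hcross.2 hqn hx c)
    · rw [inner_sub_left, inner_E_blockPrefix hp (by omega), inner_E_blockPrefix (by omega) hqn]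
      have hsame : p ≤ i ↔ q ≤ i := ⟨fun _ => by omega, fun _ => by omega⟩
      by_cases hqin : q ≤ j ∧ (q ≤ i ↔ j ≤ i)
      · rw [if_pos hqin, if_pos ⟨by omega, hsame.trans hqin.2⟩, sub_self]
      · rw [if_neg hqin, sub_zero]
        split_ifs <;> norm_num
  · rw [inner_add_left, inner_E_blockPrefix hp (by omega), inner_E_blockPrefix (by omega) hqn]
    split_ifs <;> norm_num
  · rw [inner_E_blockPrefix hp hpn]
    split_ifs <;> norm_num

lemma exists_inner_blockPrefix_eq_one {n i : ℕ} {α : EuclideanSpace ℝ (Fin n)} (hn : 1 ≤ n)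
    (hα : α ∈ PiL n i) : ∃ j, j ≠ i ∧ ⟪α, blockPrefix n i j⟫ = 1 := by
  rcases hα with ⟨j, hj, hjn, hji, rfl⟩ | ⟨hni, rfl⟩
  · refine ⟨j, hji, ?_⟩
    rw [inner_sub_left, inner_E_blockPrefix hj (by omega),
      inner_E_blockPrefix (by omega) (by omega), if_pos ⟨le_rfl, Iff.rfl⟩, if_neg (by omega), sub_zero]
  · exact ⟨n, hni, by rw [inner_E_blockPrefix hn le_rfl, if_pos ⟨le_rfl, Iff.rfl⟩]⟩

theorem no_link_for_Bni_general (n i : ℕ) (hn : 4 ≤ n) :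
    ¬ ∃ (α : EuclideanSpace ℝ (Fin n)) (βs : List (EuclideanSpace ℝ (Fin n))),
        α ∈ PiL n i ∧ (∀ β ∈ βs, β ∈ DeltaPlusB n) ∧
        Links βs (-α + deltaB n i) (-((2 : ℝ) • E n i) + deltaB n i) := by
  rintro ⟨α, βs, hα, hβs, hlink⟩
  obtain ⟨j, hji, hαu⟩ := exists_inner_blockPrefix_eq_one (by omega) hα
  have hαL : α ∈ integerLattice n :=
    DeltaPlusB_subset_integerLattice n (PiL_subset_DeltaPlusB (by omega) i hα)
  have hmono := hlink.inner_le (u := blockPrefix n i j)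
    (fun β hβ => ⟨DeltaPlusB_subset_integerLattice n (hβs β hβ),
      fun _ hx _ hc => inner_blockPrefix_nonneg (hβs β hβ) hx hc⟩)
    (by simpa using neg_mem hαL)
  rw [inner_add_left, inner_add_left, inner_neg_left, inner_neg_left, real_inner_smul_left,
    inner_E_blockPrefix_of_ne hji.symm, hαu] at hmono
  linarith

theorem no_link_for_Bni (n i : ℕ) (hn : 4 ≤ n) (hi1 : 3 ≤ i) (hi2 : i ≤ n - 1) :
    ¬ ∃ (α : EuclideanSpace ℝ (Fin n)) (βs : List (EuclideanSpace ℝ (Fin n))),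
        α ∈ PiL n i ∧ (∀ β ∈ βs, β ∈ DeltaPlusB n) ∧
        Links βs (-α + deltaB n i) (-((2 : ℝ) • E n i) + deltaB n i) :=
  no_link_for_Bni_general n i hn

end
end

section
/- (combinatorial core of Lemma 6.10) Let n ≥ 4 and 3 ≤ i ≤ n−1. Then {β ∈ Δ(𝔤(1)) : 2e_i − β ∈ Δ} = {e_i + e_k : i+1 ≤ k ≤ n} ∪ {e_i − e_k : i+1 ≤ k ≤ n} ∪ {e_i}. -/
open scoped RealInnerProductSpace

noncomputable section

/-- All roots of type `B_n`: `Δ = Δ⁺ ∪ (−Δ⁺)`. -/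
def DeltaB (n : ℕ) : Set (EuclideanSpace ℝ (Fin n)) :=
  DeltaPlusB n ∪ {v | -v ∈ DeltaPlusB n}

/-- `Δ(𝔤(1))` for `B_n(i)`:
`{e_j ± e_k : 1 ≤ j ≤ i, i+1 ≤ k ≤ n} ∪ {e_j : 1 ≤ j ≤ i}`. -/
def DeltaG1 (n i : ℕ) : Set (EuclideanSpace ℝ (Fin n)) :=
  {v | ∃ j k, 1 ≤ j ∧ j ≤ i ∧ i + 1 ≤ k ∧ k ≤ n ∧ (v = E n j - E n k ∨ v = E n j + E n k)} ∪
  {v | ∃ j, 1 ≤ j ∧ j ≤ i ∧ v = E n j}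

/-! Every root of `B_n` has all coordinates in `[-1, 1]`. If `β = e_j ± e_k` or `β = e_j` lies in
`Δ(𝔤(1))` with `j ≠ i`, then `β` vanishes at coordinate `i` (as `k > i`), so `2e_i − β` has
coordinate `2` there and is not a root. Hence `j = i`. -/

theorem E_apply (n j : ℕ) (x : Fin n) : E n j x = if (x : ℕ) + 1 = j then 1 else 0 := by
  unfold E
  split_ifs <;> simp [Fin.ext_iff] <;> omega

theorem abs_apply_le_one_of_mem_DeltaPlusB {n : ℕ} {v : EuclideanSpace ℝ (Fin n)}
    (hv : v ∈ DeltaPlusB n) (x : Fin n) : |v x| ≤ 1 := by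
  rcases hv with (⟨j, k, -, hjk, -, rfl⟩ | ⟨j, k, -, hjk, -, rfl⟩) | ⟨j, -, -, rfl⟩ <;>
    simp only [PiLp.sub_apply, PiLp.add_apply, E_apply] <;> split_ifs <;> first | omega | norm_num

theorem abs_apply_le_one_of_mem_DeltaB {n : ℕ} {v : EuclideanSpace ℝ (Fin n)}
    (hv : v ∈ DeltaB n) (x : Fin n) : |v x| ≤ 1 := by
  rcases hv with hv | hv
  · exact abs_apply_le_one_of_mem_DeltaPlusB hv x
  · simpa using abs_apply_le_one_of_mem_DeltaPlusB hv x

theorem eq_of_two_smul_E_sub_mem_DeltaB {n i j : ℕ} {x : Fin n} (hx : (x : ℕ) + 1 = i)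
    {v : EuclideanSpace ℝ (Fin n)} (hv : v x = 0)
    (h : (2 : ℝ) • E n i - (E n j + v) ∈ DeltaB n) : j = i := by
  by_contra hji
  have h2 := abs_apply_le_one_of_mem_DeltaB h x
  simp only [PiLp.sub_apply, PiLp.add_apply, PiLp.smul_apply, smul_eq_mul, E_apply, hv] at h2
  rw [if_pos hx, if_neg (by omega)] at h2
  norm_num at h2

theorem g1_roots_with_2ei_sub_root_general (n i : ℕ)
    (hi1 : 3 ≤ i) (hi2 : i ≤ n - 1) :
    {β | β ∈ DeltaG1 n i ∧ (2 : ℝ) • E n i - β ∈ DeltaB n} =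
      {v | ∃ k, i + 1 ≤ k ∧ k ≤ n ∧ v = E n i + E n k} ∪
      {v | ∃ k, i + 1 ≤ k ∧ k ≤ n ∧ v = E n i - E n k} ∪
      {E n i} := by
  let x : Fin n := ⟨i - 1, by omega⟩
  have hx : (x : ℕ) + 1 = i := by simp [x]; omega
  have hE (k : ℕ) (hk : i < k) : E n k x = 0 := by rw [E_apply, if_neg (by omega)]
  ext β
  simp only [Set.mem_union, Set.mem_singleton_iff]
  constructor
  · rintro ⟨⟨j, k, -, -, hik, hkn, rfl | rfl⟩ | ⟨j, -, -, rfl⟩, hroot⟩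
    · rw [sub_eq_add_neg (E n j)] at hroot
      obtain rfl := eq_of_two_smul_E_sub_mem_DeltaB hx (by simp [hE k hik]) hroot
      exact Or.inl (Or.inr ⟨k, hik, hkn, rfl⟩)
    · obtain rfl := eq_of_two_smul_E_sub_mem_DeltaB hx (hE k hik) hroot
      exact Or.inl (Or.inl ⟨k, hik, hkn, rfl⟩)
    · rw [← add_zero (E n j)] at hroot
      obtain rfl := eq_of_two_smul_E_sub_mem_DeltaB hx rfl hroot
      exact Or.inr rfl
  · rintro ((⟨k, hik, hkn, rfl⟩ | ⟨k, hik, hkn, rfl⟩) | rfl)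
    · refine ⟨Or.inl ⟨i, k, by omega, le_rfl, hik, hkn, Or.inr rfl⟩, ?_⟩
      rw [show (2 : ℝ) • E n i - (E n i + E n k) = E n i - E n k by module]
      exact Or.inl (Or.inl (Or.inl ⟨i, k, by omega, hik, hkn, rfl⟩))
    · refine ⟨Or.inl ⟨i, k, by omega, le_rfl, hik, hkn, Or.inl rfl⟩, ?_⟩
      rw [show (2 : ℝ) • E n i - (E n i - E n k) = E n i + E n k by module]
      exact Or.inl (Or.inl (Or.inr ⟨i, k, by omega, hik, hkn, rfl⟩))
    · refine ⟨Or.inr ⟨i, by omega, le_rfl, rfl⟩, ?_⟩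
      rw [show (2 : ℝ) • E n i - E n i = E n i by module]
      exact Or.inl (Or.inr ⟨i, by omega, by omega, rfl⟩)

/-- combinatorial core of Lemma 6.10:
`{β ∈ Δ(𝔤(1)) : 2e_i − β ∈ Δ} = {e_i ± e_k : i+1 ≤ k ≤ n} ∪ {e_i}`. -/
theorem g1_roots_with_2ei_sub_root (n i : ℕ)
    (hn : 4 ≤ n) (hi1 : 3 ≤ i) (hi2 : i ≤ n - 1) :
    {β | β ∈ DeltaG1 n i ∧ (2 : ℝ) • E n i - β ∈ DeltaB n} =
      {v | ∃ k, i + 1 ≤ k ∧ k ≤ n ∧ v = E n i + E n k} ∪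
      {v | ∃ k, i + 1 ≤ k ∧ k ≤ n ∧ v = E n i - E n k} ∪
      {E n i} :=
  g1_roots_with_2ei_sub_root_general n i hi1 hi2

end
end

section
/- (case B_n(i) of Theorem 6.4) Let n ≥ 5 and 3 ≤ i ≤ n−2, and set δ = −λ_i + ρ. Then the sequence (e_{i−1} − e_i, e_i − e_{i+1}) links −(e_{i+1} − e_{i+2}) + δ to −2(e_i − e_{i+1}) − (e_{i−1} − e_i) − (e_{i+1} − e_{i+2}) + δ. Explicitly: ⟨−(e_{i+1} − e_{i+2}) + δ, (e_{i−1} − e_i)^∨⟩ = 1, then ⟨s_{e_{i−1}−e_i}(−(e_{i+1} − e_{i+2}) + δ), (e_i − e_{i+1})^∨⟩ = 2, and s_{e_i − e_{i+1}} s_{e_{i−1} − e_i}(−(e_{i+1} − e_{i+2}) + δ) = −2(e_i − e_{i+1}) − (e_{i−1} − e_i) − (e_{i+1} − e_{i+2}) + δ. (By Lepowsky's criterion this shows the standard map between the generalized Verma modules arising from the Ω_2 system for V(μ+ε_{nγ}) of type B_n(i) is zero, so φ_{Ω2} is non-standard.) -/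
open scoped RealInnerProductSpace

noncomputable section

/-! The three vectors `α₁ = e_{i-1} - e_i`, `α₂ = e_i - e_{i+1}`, `α₃ = e_{i+1} - e_{i+2}` form a
chain of simple roots of type `A_3`; each has squared length 2, so it is its own coroot. The weight
`-λ_i + ρ` pairs to 1 with `α₁` and to 0 with `α₂`, since `ρ` pairs to 1 with every `e_j - e_{j+1}`
and `λ_i` only sees `α₂`. The two reflections are then determined by these pairings and the
Cartan integers of the chain alone. -/

section

variable {n : ℕ}

lemma inner_E_E_s6 {a b : ℕ} (ha : a ∈ Finset.Icc 1 n) (hb : b ∈ Finset.Icc 1 n) :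
    ⟪E n a, E n b⟫ = if a = b then 1 else 0 := by
  rw [Finset.mem_Icc] at ha hb
  rw [E, E, dif_pos ha, dif_pos hb, EuclideanSpace.inner_single_left,
    PiLp.single_apply]
  simp only [Fin.mk.injEq, map_one, one_mul]
  congr 1
  apply propext
  omega

lemma inner_E_sub_E_E_sub_E {a b c d : ℕ} (ha : a ∈ Finset.Icc 1 n) (hb : b ∈ Finset.Icc 1 n)
    (hc : c ∈ Finset.Icc 1 n) (hd : d ∈ Finset.Icc 1 n) :
    ⟪E n a - E n b, E n c - E n d⟫ =
      (if a = c then 1 else 0) - (if a = d then 1 else 0) - (if b = c then 1 else 0) +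
        (if b = d then 1 else 0) := by
  rw [inner_sub_left, inner_sub_right, inner_sub_right, inner_E_E_s6 ha hc, inner_E_E_s6 ha hd,
    inner_E_E_s6 hb hc, inner_E_E_s6 hb hd]
  ring

lemma inner_lambdaF_E {i a : ℕ} (hi : i ≤ n) (ha : a ∈ Finset.Icc 1 n) :
    ⟪lambdaF n i, E n a⟫ = if a ≤ i then 1 else 0 := by
  have hsub : Finset.Icc 1 i ⊆ Finset.Icc 1 n := Finset.Icc_subset_Icc_right hi
  rw [lambdaF, sum_inner, Finset.sum_congr rfl fun j hj => inner_E_E_s6 (hsub hj) ha,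
    Finset.sum_ite_eq']
  simp_all [Finset.mem_Icc]

lemma inner_lambdaF_E_sub_E {i a b : ℕ} (hi : i ≤ n) (ha : a ∈ Finset.Icc 1 n)
    (hb : b ∈ Finset.Icc 1 n) :
    ⟪lambdaF n i, E n a - E n b⟫ = (if a ≤ i then 1 else 0) - (if b ≤ i then 1 else 0) := by
  rw [inner_sub_right, inner_lambdaF_E hi ha, inner_lambdaF_E hi hb]

lemma inner_rhoB_E {a : ℕ} (ha : a ∈ Finset.Icc 1 n) :
    ⟪rhoB n, E n a⟫ = n - a + 1 / 2 := by
  simp_rw [rhoB, sum_inner, real_inner_smul_left]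
  rw [Finset.sum_congr rfl fun j hj => by rw [inner_E_E_s6 hj ha]]
  simp [ha]

lemma inner_rhoB_E_sub_E {a b : ℕ} (ha : a ∈ Finset.Icc 1 n) (hb : b ∈ Finset.Icc 1 n) :
    ⟪rhoB n, E n a - E n b⟫ = b - a := by
  rw [inner_sub_right, inner_rhoB_E ha, inner_rhoB_E hb]
  ring

lemma coroot_eq_self_of_inner_self {β : EuclideanSpace ℝ (Fin n)} (h : ⟪β, β⟫ = 2) :
    coroot β = β := by
  rw [coroot, h, div_self two_ne_zero, one_smul]

lemma links_pair {β₁ β₂ δ lam : EuclideanSpace ℝ (Fin n)} (c₁ c₂ : ℕ)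
    (h₁ : ⟪δ, coroot β₁⟫ = c₁) (h₂ : ⟪sRefl β₁ δ, coroot β₂⟫ = c₂)
    (h : sRefl β₂ (sRefl β₁ δ) = lam) : Links [β₁, β₂] δ lam :=
  .cons c₁ h₁ (.cons c₂ h₂ (h ▸ .nil _))

lemma links_of_inner {α₁ α₂ α₃ δ : EuclideanSpace ℝ (Fin n)}
    (h₁₁ : ⟪α₁, α₁⟫ = 2) (h₂₂ : ⟪α₂, α₂⟫ = 2) (h₁₂ : ⟪α₁, α₂⟫ = -1)
    (h₃₁ : ⟪α₃, α₁⟫ = 0) (h₃₂ : ⟪α₃, α₂⟫ = -1) (hδ₁ : ⟪δ, α₁⟫ = 1) (hδ₂ : ⟪δ, α₂⟫ = 0) :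
    Links [α₁, α₂] (-α₃ + δ) (-((2 : ℝ) • α₂) - α₁ - α₃ + δ) ∧
      ⟪-α₃ + δ, coroot α₁⟫ = 1 ∧
      ⟪sRefl α₁ (-α₃ + δ), coroot α₂⟫ = 2 ∧
      sRefl α₂ (sRefl α₁ (-α₃ + δ)) = -((2 : ℝ) • α₂) - α₁ - α₃ + δ := by
  have pair₁ : ⟪-α₃ + δ, coroot α₁⟫ = 1 := by
    rw [coroot_eq_self_of_inner_self h₁₁, inner_add_left, inner_neg_left, h₃₁, hδ₁]
    norm_num
  have refl₁ : sRefl α₁ (-α₃ + δ) = -α₃ + δ - α₁ := by rw [sRefl, pair₁, one_smul]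
  have pair₂ : ⟪sRefl α₁ (-α₃ + δ), coroot α₂⟫ = 2 := by
    rw [refl₁, coroot_eq_self_of_inner_self h₂₂, inner_sub_left, inner_add_left,
      inner_neg_left, h₃₂, hδ₂, h₁₂]
    norm_num
  have refl₂ : sRefl α₂ (sRefl α₁ (-α₃ + δ)) = -((2 : ℝ) • α₂) - α₁ - α₃ + δ := by
    rw [sRefl, pair₂, refl₁]
    module
  exact ⟨links_pair 1 2 (by exact_mod_cast pair₁) (by exact_mod_cast pair₂) refl₂,
    pair₁, pair₂, refl₂⟩

end

theorem link_for_Bni_ngamma_general (n i : ℕ) (hi1 : 3 ≤ i) (hi2 : i ≤ n - 2) :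
    Links [E n (i - 1) - E n i, E n i - E n (i + 1)]
      (-(E n (i + 1) - E n (i + 2)) + (-lambdaF n i + rhoB n))
      (-((2 : ℝ) • (E n i - E n (i + 1))) - (E n (i - 1) - E n i) - (E n (i + 1) - E n (i + 2))
        + (-lambdaF n i + rhoB n)) ∧
    ⟪-(E n (i + 1) - E n (i + 2)) + (-lambdaF n i + rhoB n),
        coroot (E n (i - 1) - E n i)⟫ = 1 ∧
    ⟪sRefl (E n (i - 1) - E n i)
        (-(E n (i + 1) - E n (i + 2)) + (-lambdaF n i + rhoB n)),
        coroot (E n i - E n (i + 1))⟫ = 2 ∧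
    sRefl (E n i - E n (i + 1))
        (sRefl (E n (i - 1) - E n i)
          (-(E n (i + 1) - E n (i + 2)) + (-lambdaF n i + rhoB n))) =
      -((2 : ℝ) • (E n i - E n (i + 1))) - (E n (i - 1) - E n i) - (E n (i + 1) - E n (i + 2))
        + (-lambdaF n i + rhoB n) := by
  -- writing `i = k + 1` removes the truncated subtraction in `i - 1`
  obtain ⟨k, rfl⟩ : ∃ k, i = k + 1 := ⟨i - 1, by omega⟩
  simp only [Nat.add_sub_cancel, add_assoc, Nat.reduceAdd]
  have h₀ : k ∈ Finset.Icc 1 n := Finset.mem_Icc.2 ⟨by omega, by omega⟩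
  have h₁ : k + 1 ∈ Finset.Icc 1 n := Finset.mem_Icc.2 ⟨by omega, by omega⟩
  have h₂ : k + 2 ∈ Finset.Icc 1 n := Finset.mem_Icc.2 ⟨by omega, by omega⟩
  have h₃ : k + 3 ∈ Finset.Icc 1 n := Finset.mem_Icc.2 ⟨by omega, by omega⟩
  have hk : k + 1 ≤ n := by omega
  apply links_of_inner <;>
    simp only [inner_add_left, inner_neg_left, inner_E_sub_E_E_sub_E, inner_lambdaF_E_sub_E hk,
      inner_rhoB_E_sub_E, h₀, h₁, h₂, h₃] <;>
    norm_num

/-- case `B_n(i)`, `3 ≤ i ≤ n−2`, of Theorem 6.4: with `δ = −λ_i + ρ`,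
the sequence `(e_{i−1} − e_i, e_i − e_{i+1})` links `−(e_{i+1} − e_{i+2}) + δ` to
`−2(e_i − e_{i+1}) − (e_{i−1} − e_i) − (e_{i+1} − e_{i+2}) + δ`, with the explicit
pairings `1` and `2` along the way. -/
theorem link_for_Bni_ngamma (n i : ℕ) (hn : 5 ≤ n) (hi1 : 3 ≤ i) (hi2 : i ≤ n - 2) :
    Links [E n (i - 1) - E n i, E n i - E n (i + 1)]
      (-(E n (i + 1) - E n (i + 2)) + (-lambdaF n i + rhoB n))
      (-((2 : ℝ) • (E n i - E n (i + 1))) - (E n (i - 1) - E n i) - (E n (i + 1) - E n (i + 2))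
        + (-lambdaF n i + rhoB n)) ∧
    ⟪-(E n (i + 1) - E n (i + 2)) + (-lambdaF n i + rhoB n),
        coroot (E n (i - 1) - E n i)⟫ = 1 ∧
    ⟪sRefl (E n (i - 1) - E n i)
        (-(E n (i + 1) - E n (i + 2)) + (-lambdaF n i + rhoB n)),
        coroot (E n i - E n (i + 1))⟫ = 2 ∧
    sRefl (E n i - E n (i + 1))
        (sRefl (E n (i - 1) - E n i)
          (-(E n (i + 1) - E n (i + 2)) + (-lambdaF n i + rhoB n))) =
      -((2 : ℝ) • (E n i - E n (i + 1))) - (E n (i - 1) - E n i) - (E n (i + 1) - E n (i + 2))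
        + (-lambdaF n i + rhoB n) :=
  link_for_Bni_ngamma_general n i hi1 hi2

end
end
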